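/- For any h > 0 and any real data values f_A, f_B, f_C, f_D, f_E, f_F, there is at most one bivariate polynomial of total degree at most 2 taking the values f_A, f_B, f_C, f_D, f_E, f_F at the points A, B, C, D, E, F respectively; equivalently, if two bivariate quadratics of the form q(x,y) = c₀₀ + c₁₀x + c₀₁(y − (√3/6)h) + c₂₀x² + c₁₁x(y − (√3/6)h) + c₀₂(y − (√3/6)h)² agree at the six points A, B, C, D, E, F, then their six coefficients coincide. -/
import Mathlib


set_option linter.unusedVariables false
set_option maxHeartbeats 1000000

/-- √3 -/
noncomputable def s3 : ℝ := Real.sqrt 3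

/-- Vertices of the equilateral triangle of side `2h` and the midpoints of its sides. -/
noncomputable def ptA (h : ℝ) : ℝ × ℝ := (-h, s3 / 2 * h)
noncomputable def ptB (h : ℝ) : ℝ × ℝ := (-h / 2, 0)
noncomputable def ptC (h : ℝ) : ℝ × ℝ := (0, -(s3 / 2 * h))
noncomputable def ptD (h : ℝ) : ℝ × ℝ := (h / 2, 0)
noncomputable def ptE (h : ℝ) : ℝ × ℝ := (h, s3 / 2 * h)
noncomputable def ptF (h : ℝ) : ℝ × ℝ := (0, s3 / 2 * h)

/-- Coefficients of the quadratic interpolant. -/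
noncomputable def a00 (h fA fB fC fD fE fF : ℝ) : ℝ := 4 / 9 * (fB + fD + fF) - 1 / 9 * (fA + fC + fE)
noncomputable def a10 (h fA fB fC fD fE fF : ℝ) : ℝ := (-fA - 4 * fB + 4 * fD + fE) / (6 * h)
noncomputable def a01 (h fA fB fC fD fE fF : ℝ) : ℝ := s3 / (18 * h) * (fA - 4 * fB - 2 * fC - 4 * fD + fE + 8 * fF)
noncomputable def a20 (h fA fB fC fD fE fF : ℝ) : ℝ := (fA - 2 * fF + fE) / (2 * h ^ 2)
noncomputable def a11 (h fA fB fC fD fE fF : ℝ) : ℝ := -(s3 / (3 * h ^ 2)) * (fA - 2 * fB + 2 * fD - fE)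
noncomputable def a02 (h fA fB fC fD fE fF : ℝ) : ℝ := (fA - 4 * fB + 4 * fC - 4 * fD + fE + 2 * fF) / (6 * h ^ 2)

/-- The quadratic interpolant `p(x,y)`. -/
noncomputable def interp (h fA fB fC fD fE fF x y : ℝ) : ℝ :=
  a00 h fA fB fC fD fE fF + a10 h fA fB fC fD fE fF * x
    + a01 h fA fB fC fD fE fF * (y - s3 / 6 * h)
    + a20 h fA fB fC fD fE fF * x ^ 2
    + a11 h fA fB fC fD fE fF * x * (y - s3 / 6 * h)
    + a02 h fA fB fC fD fE fF * (y - s3 / 6 * h) ^ 2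

/-- A general bivariate quadratic written around the barycenter. -/
noncomputable def quadForm (h c00 c10 c01 c20 c11 c02 x y : ℝ) : ℝ :=
  c00 + c10 * x + c01 * (y - s3 / 6 * h) + c20 * x ^ 2 + c11 * x * (y - s3 / 6 * h)
    + c02 * (y - s3 / 6 * h) ^ 2

/-- Uniqueness of the quadratic interpolant: if two bivariate quadratics agree at the six
points `A, B, C, D, E, F`, then their coefficients coincide. -/
theorem interp_unique (h : ℝ) (hh : 0 < h)
    (c00 c10 c01 c20 c11 c02 d00 d10 d01 d20 d11 d02 : ℝ)
    (hagree : ∀ P ∈ ({ptA h, ptB h, ptC h, ptD h, ptE h, ptF h} : Set (ℝ × ℝ)),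
      quadForm h c00 c10 c01 c20 c11 c02 P.1 P.2 = quadForm h d00 d10 d01 d20 d11 d02 P.1 P.2) :
    c00 = d00 ∧ c10 = d10 ∧ c01 = d01 ∧ c20 = d20 ∧ c11 = d11 ∧ c02 = d02 := by
  have hA := hagree (ptA h) (by simp)
  have hB := hagree (ptB h) (by simp)
  have hC := hagree (ptC h) (by simp)
  have hD := hagree (ptD h) (by simp)
  have hE := hagree (ptE h) (by simp)
  have hF := hagree (ptF h) (by simp)
  simp only [quadForm, ptA, ptB, ptC, ptD, ptE, ptF] at hA hB hC hD hE hF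
  have hs : s3 ^ 2 = 3 := Real.sq_sqrt (by norm_num)
  have hne : h ≠ 0 := ne_of_gt hh
  have g00 : c00 - d00 = 0 := by
    linear_combination (4/9 : ℝ) * (hB + hD + hF) - (1/9 : ℝ) * (hA + hC + hE)
  have g10 : 6 * h * (c10 - d10) = 0 := by
    linear_combination -hA - 4 * hB + 4 * hD + hE
  have g01 : 18 * h * (c01 - d01) = 0 := by
    linear_combination s3 * (hA - 4 * hB - 2 * hC - 4 * hD + hE + 8 * hF)
      - 6 * h * (c01 - d01) * hs
  have g20 : 2 * h ^ 2 * (c20 - d20) = 0 := by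
    linear_combination hA - 2 * hF + hE
  have g11 : 3 * h ^ 2 * (c11 - d11) = 0 := by
    linear_combination -s3 * (hA - 2 * hB + 2 * hD - hE) - h ^ 2 * (c11 - d11) * hs
  have g02 : 6 * h ^ 2 * (c02 - d02) = 0 := by
    linear_combination hA - 4 * hB + 4 * hC - 4 * hD + hE + 2 * hF
      - 2 * h ^ 2 * (c02 - d02) * hs
  have hh2 : h ^ 2 ≠ 0 := pow_ne_zero _ hne
  refine ⟨by linarith, ?_, ?_, ?_, ?_, ?_⟩
  · have := (mul_eq_zero.mp g10).resolve_left (by positivity)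
    linarith
  · have := (mul_eq_zero.mp g01).resolve_left (by positivity)
    linarith
  · have := (mul_eq_zero.mp g20).resolve_left (by positivity)
    linarith
  · have := (mul_eq_zero.mp g11).resolve_left (by positivity)
    linarith
  · have := (mul_eq_zero.mp g02).resolve_left (by positivity)
    linarith
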